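/- arXiv:2203.05694 — 3 statements merged into one kernel-verified Lean document; each statement's English description precedes it below -/
import Mathlib

section
/- Let λ > 0, Γ > 0, Y₀ > 0 be real numbers, let c₂ be a nonzero real number and let δ₀ > 0. Define y(s)² := Y₀²·(1 + (Γ/λ)·Y₀²·s)^{-1} and Λ(s) := (2c₂λ/Γ)·log(1 + (Γ/λ)·Y₀²·s) for s ≥ 0. Then for every t > 0 and every μ ∈ ℝ with |μ|·t ≤ δ₀ one has |∫₀ᵗ e^{isμ} · e^{iΛ(s)} · y(s)² ds − (1/(2ic₂))·(e^{iΛ(t)} − 1)| ≤ δ₀/|c₂|. -/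
open MeasureTheory Real

/-! Since `Λ' = 2 c₂ y²`, the integrand is `e^{isμ} · (e^{iΛ})' / (2 i c₂)`. Integrating by parts
moves the derivative onto `e^{isμ}`, whose derivative has modulus `|μ|`, so the new integral is at
most `|μ| t / (2 |c₂|)`. The boundary term differs from `(e^{iΛ(t)} - 1) / (2 i c₂)` by
`(e^{itμ} - 1) e^{iΛ(t)} / (2 i c₂)`, of the same size, and `|μ| t ≤ δ₀`. -/

section

open Complex

theorem norm_integral_exp_mul_exp_mul_deriv_add_le {Λ Λ' : ℝ → ℝ} {t : ℝ} (μ : ℝ)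
    (hΛ : ∀ s ∈ Set.uIcc 0 t, HasDerivAt Λ (Λ' s) s)
    (hΛ' : IntervalIntegrable Λ' volume 0 t) :
    ‖(∫ s in (0:ℝ)..t, cexp (I * s * μ) * cexp (I * Λ s) * (Λ' s : ℂ))
        + I * (cexp (I * Λ t) - cexp (I * Λ 0))‖ ≤ 2 * |μ| * |t| := by
  set u : ℝ → ℂ := fun s => cexp (I * s * μ)
  set v : ℝ → ℂ := fun s => -I * cexp (I * Λ s)
  have hu : ∀ s ∈ Set.uIcc 0 t, HasDerivAt u (u s * (I * μ)) s := fun s _ => by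
    simpa using ((((hasDerivAt_id s).ofReal_comp).const_mul I).mul_const (μ : ℂ)).cexp
  have hv : ∀ s ∈ Set.uIcc 0 t, HasDerivAt v (cexp (I * Λ s) * Λ' s) s := fun s hs => by
    refine ((hΛ s hs).ofReal_comp.const_mul I).cexp.const_mul (-I) |>.congr_deriv ?_
    linear_combination -(cexp (I * Λ s) * Λ' s) * I_sq
  have hΛc : ContinuousOn Λ (Set.uIcc 0 t) := HasDerivAt.continuousOn hΛ
  have hv' : IntervalIntegrable (fun s => cexp (I * Λ s) * Λ' s) volume 0 t :=
    IntervalIntegrable.continuousOn_mul ⟨hΛ'.1.ofReal, hΛ'.2.ofReal⟩ (by fun_prop)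
  have hu' : IntervalIntegrable (fun s => u s * (I * μ)) volume 0 t := by
    apply Continuous.intervalIntegrable; fun_prop
  have hnorm_exp : ∀ x : ℝ, ‖cexp (I * x)‖ = 1 := fun x => by
    rw [mul_comm, norm_exp_ofReal_mul_I]
  have hIBP := intervalIntegral.integral_mul_deriv_eq_deriv_mul hu hv hu' hv'
  have hu0 : u 0 = 1 := by simp [u]
  have hrem : (∫ s in (0:ℝ)..t, cexp (I * s * μ) * cexp (I * Λ s) * (Λ' s : ℂ))
      + I * (cexp (I * Λ t) - cexp (I * Λ 0))
      = (u t - 1) * v t - ∫ s in (0:ℝ)..t, u s * (I * μ) * v s := by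
    simp_rw [mul_assoc (cexp _)]
    rw [hIBP, hu0]
    simp only [v]
    ring
  have hvt : ‖v t‖ = 1 := by simp [v, hnorm_exp]
  have hut : ‖u t - 1‖ ≤ |μ| * |t| := by
    calc ‖u t - 1‖ = ‖cexp (I * ↑(t * μ)) - 1‖ := by simp [u, mul_assoc]
      _ ≤ |μ| * |t| := by
        grw [Real.norm_exp_I_mul_ofReal_sub_one_le]; rw [norm_mul, mul_comm]; rfl
  have hint : ‖∫ s in (0:ℝ)..t, u s * (I * μ) * v s‖ ≤ |μ| * |t| := by
    simpa using intervalIntegral.norm_integral_le_of_norm_le_const (a := 0) (b := t)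
      (f := fun s => u s * (I * μ) * v s) fun s _ => by simp [u, v, Complex.norm_exp]
  rw [hrem]
  calc _ ≤ ‖(u t - 1) * v t‖ + ‖∫ s in (0:ℝ)..t, u s * (I * μ) * v s‖ := norm_sub_le _ _
    _ ≤ |μ| * |t| + |μ| * |t| := by rw [norm_mul, hvt, mul_one]; gcongr
    _ = 2 * |μ| * |t| := by ring

theorem norm_integral_exp_mul_exp_mul_sub_le {Λ y : ℝ → ℝ} {t c : ℝ} (μ : ℝ) (hc : c ≠ 0)
    (hΛ : ∀ s ∈ Set.uIcc 0 t, HasDerivAt Λ (2 * c * y s) s) (hΛ0 : Λ 0 = 0)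
    (hy : IntervalIntegrable y volume 0 t) :
    ‖(∫ s in (0:ℝ)..t, cexp (I * s * μ) * cexp (I * Λ s) * (y s : ℂ))
        - 1 / (2 * I * c) * (cexp (I * Λ t) - 1)‖ ≤ |μ| * |t| / |c| := by
  have key := norm_integral_exp_mul_exp_mul_deriv_add_le μ hΛ (hy.const_mul (2 * c))
  have hc' : (c : ℂ) ≠ 0 := ofReal_ne_zero.mpr hc
  have hintegral :
      (∫ s in (0:ℝ)..t, cexp (I * s * μ) * cexp (I * Λ s) * ((2 * c * y s : ℝ) : ℂ))
      = 2 * c * ∫ s in (0:ℝ)..t, cexp (I * s * μ) * cexp (I * Λ s) * (y s : ℂ) := by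
    rw [← intervalIntegral.integral_const_mul]
    congr 1 with s
    push_cast; ring
  rw [hintegral, hΛ0, ofReal_zero, mul_zero, Complex.exp_zero] at key
  generalize (∫ s in (0:ℝ)..t, cexp (I * s * μ) * cexp (I * Λ s) * (y s : ℂ)) = J at key ⊢
  calc _ = ‖(2 * c : ℂ)⁻¹ * (2 * c * J + I * (cexp (I * Λ t) - 1))‖ := by
        congr 1; field_simp; linear_combination (1 - cexp (I * Λ t)) * I_sq
    _ ≤ (2 * |c|)⁻¹ * (2 * |μ| * |t|) := by
        rw [norm_mul, norm_inv, norm_mul, Complex.norm_two, norm_real, Real.norm_eq_abs]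
        gcongr
    _ = |μ| * |t| / |c| := by field_simp

end

theorem hasDerivAt_mul_log_one_add_mul (k a : ℝ) {s : ℝ} (hs : 1 + a * s ≠ 0) :
    HasDerivAt (fun s => k * log (1 + a * s)) (k * a * (1 + a * s)⁻¹) s := by
  simpa [mul_assoc, div_eq_mul_inv] using
    ((((hasDerivAt_id s).const_mul a).const_add 1).log hs).const_mul k

theorem stmt_1_general (lam Γ Y₀ : ℝ) (hlam : 0 < lam) (hΓ : 0 < Γ)
    (c₂ : ℝ) (hc₂ : c₂ ≠ 0) (δ₀ : ℝ) :
    ∀ t : ℝ, 0 < t → ∀ μ : ℝ, |μ| * t ≤ δ₀ →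
      ‖(∫ s in (0:ℝ)..t,
            Complex.exp (Complex.I * s * μ) *
              Complex.exp (Complex.I *
                ((2 * c₂ * lam / Γ) * Real.log (1 + (Γ / lam) * Y₀ ^ 2 * s))) *
              ((Y₀ ^ 2 * (1 + (Γ / lam) * Y₀ ^ 2 * s)⁻¹ : ℝ) : ℂ))
          - (1 / (2 * Complex.I * c₂)) *
              (Complex.exp (Complex.I *
                  ((2 * c₂ * lam / Γ) * Real.log (1 + (Γ / lam) * Y₀ ^ 2 * t))) - 1)‖
        ≤ δ₀ / |c₂| := by
  intro t ht μ hμ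
  set a := Γ / lam * Y₀ ^ 2
  have hpos : ∀ s ∈ Set.uIcc 0 t, 0 < 1 + a * s := fun s hs => by
    rw [Set.uIcc_of_le ht.le] at hs
    have ha : 0 ≤ a := by positivity
    exact add_pos_of_pos_of_nonneg one_pos (mul_nonneg ha hs.1)
  have hderiv : ∀ s ∈ Set.uIcc 0 t, HasDerivAt (fun s => 2 * c₂ * lam / Γ * log (1 + a * s))
      (2 * c₂ * (Y₀ ^ 2 * (1 + a * s)⁻¹)) s := fun s hs =>
    (hasDerivAt_mul_log_one_add_mul _ a (hpos s hs).ne').congr_deriv (by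
      simp only [a]; field_simp)
  have hint : IntervalIntegrable (fun s => Y₀ ^ 2 * (1 + a * s)⁻¹) volume 0 t :=
    ContinuousOn.intervalIntegrable <| continuousOn_const.mul <|
      ContinuousOn.inv₀ (by fun_prop) fun s hs => (hpos s hs).ne'
  have key := norm_integral_exp_mul_exp_mul_sub_le μ hc₂ hderiv (by simp) hint
  push_cast at key ⊢
  calc _ ≤ |μ| * |t| / |c₂| := key
    _ ≤ δ₀ / |c₂| := by rw [abs_of_pos ht]; gcongr

/-- For `λ, Γ, Y₀ > 0`, `c₂ ≠ 0`, `δ₀ > 0`, with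
`y(s)² = Y₀²(1 + (Γ/λ)Y₀²s)⁻¹` and `Λ(s) = (2c₂λ/Γ)·log(1 + (Γ/λ)Y₀²s)`,
for every `t > 0` and `μ` with `|μ|·t ≤ δ₀`,
`|∫₀ᵗ e^{isμ} e^{iΛ(s)} y(s)² ds − (1/(2ic₂))(e^{iΛ(t)} − 1)| ≤ δ₀/|c₂|`. -/
theorem stmt_1 (lam Γ Y₀ : ℝ) (hlam : 0 < lam) (hΓ : 0 < Γ) (hY₀ : 0 < Y₀)
    (c₂ : ℝ) (hc₂ : c₂ ≠ 0) (δ₀ : ℝ) (hδ₀ : 0 < δ₀) :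
    ∀ t : ℝ, 0 < t → ∀ μ : ℝ, |μ| * t ≤ δ₀ →
      ‖(∫ s in (0:ℝ)..t,
            Complex.exp (Complex.I * s * μ) *
              Complex.exp (Complex.I *
                ((2 * c₂ * lam / Γ) * Real.log (1 + (Γ / lam) * Y₀ ^ 2 * s))) *
              ((Y₀ ^ 2 * (1 + (Γ / lam) * Y₀ ^ 2 * s)⁻¹ : ℝ) : ℂ))
          - (1 / (2 * Complex.I * c₂)) *
              (Complex.exp (Complex.I *
                  ((2 * c₂ * lam / Γ) * Real.log (1 + (Γ / lam) * Y₀ ^ 2 * t))) - 1)‖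
        ≤ δ₀ / |c₂| :=
  stmt_1_general lam Γ Y₀ hlam hΓ c₂ hc₂ δ₀
end

section
/- Let k ∈ ℤ and let g : ℝ → ℂ be a C³ function supported in {ρ ∈ ℝ : 2^{k−1} ≤ |ρ| ≤ 2^{k+1}} satisfying |g^{(β)}(ρ)| ≤ 1 + (|ρ|/⟨ρ⟩)^{1−β} for all 0 ≤ β ≤ 3. Then there is an absolute constant C such that for all x ∈ ℝ: |∫_ℝ e^{i x ρ} g(ρ) dρ| ≤ C · 2^k · (1 + |x|)^{−1} · (1 + (2^k/⟨2^k⟩)|x|)^{−2}; consequently ∫_ℝ |∫_ℝ e^{i x ρ} g(ρ) dρ| dx ≤ C · ⟨2^k⟩. -/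
/-!
Since `∫ e^{ixρ} g(ρ) dρ = 𝓕 g (-x/2π)` and `𝓕 (g⁽ⁿ⁾) (w) = (2πiw)ⁿ 𝓕 g (w)`, we get
`|x|ⁿ |∫ e^{ixρ} g| ≤ ‖g⁽ⁿ⁾‖₁`. On the annulus `2^{k-1} ≤ |ρ| ≤ 2^{k+1}` the symbol bounds give
`‖g‖₁, ‖g'‖₁ ≲ 2^k` and `‖g'''‖₁ ≲ ⟨2^k⟩²/2^k`. With `λ = 2^k/⟨2^k⟩ ≤ 1` these combine through
`(1+t)(1+λt)² ≤ 1 + 5t + 3λ²t³` into the pointwise bound, and since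
`(1+|x|)(1+λ|x|)² ≥ 1 + (λx)²`, integrating in `x` costs `π/λ`, giving `≲ ⟨2^k⟩`.
-/

open MeasureTheory Real Set Function Complex FourierTransform

theorem support_iteratedDeriv_subset_of_isClosed {𝕜 F : Type*} [NontriviallyNormedField 𝕜]
    [NormedAddCommGroup F] [NormedSpace 𝕜 F] {f : 𝕜 → F} {s : Set 𝕜} (hs : IsClosed s)
    (hf : support f ⊆ s) (n : ℕ) : support (iteratedDeriv n f) ⊆ s := by
  induction n with
  | zero => simpa using hf
  | succ n ih =>
    rw [iteratedDeriv_succ]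
    exact support_deriv_subset.trans (closure_minimal ih hs)

theorem integral_norm_le_of_support_subset {X E : Type*} [MeasurableSpace X] {μ : Measure X}
    [NormedAddCommGroup E] {f : X → E} {s : Set X} {M : ℝ} (hs : μ s < ⊤)
    (hf : support f ⊆ s) (hM : ∀ x, ‖f x‖ ≤ M) :
    ∫ x, ‖f x‖ ∂μ ≤ M * μ.real s := by
  have hcompl : ∀ x ∉ s, ‖f x‖ = 0 := fun x hx => by
    simpa using notMem_support.1 fun h => hx (hf h)
  calc ∫ x, ‖f x‖ ∂μ = ∫ x in s, ‖f x‖ ∂μ :=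
        (setIntegral_eq_integral_of_forall_compl_eq_zero hcompl).symm
    _ ≤ ‖∫ x in s, ‖f x‖ ∂μ‖ := le_norm_self _
    _ ≤ M * μ.real s := norm_setIntegral_le_of_norm_le_const hs fun x _ => by simpa using hM x

theorem integral_exp_I_mul_mul_eq_fourier (g : ℝ → ℂ) (x : ℝ) :
    ∫ ρ : ℝ, exp (I * x * ρ) * g ρ = 𝓕 g (-x / (2 * π)) := by
  rw [Real.fourier_real_eq_integral_exp_smul]
  congr 1 with ρ
  rw [smul_eq_mul]
  congr 2
  push_cast
  field_simp

theorem pow_abs_mul_norm_integral_exp_I_mul_mul_le {N : ℕ∞} {g : ℝ → ℂ} (hg : ContDiff ℝ N g)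
    (hint : ∀ n : ℕ, n ≤ N → Integrable (iteratedDeriv n g)) {n : ℕ} (hn : n ≤ N) (x : ℝ) :
    |x| ^ n * ‖∫ ρ : ℝ, exp (I * x * ρ) * g ρ‖ ≤ ∫ ρ, ‖iteratedDeriv n g ρ‖ := by
  have hnorm : ‖2 * (π : ℂ) * I * ((-x / (2 * π) : ℝ) : ℂ)‖ = |x| := by
    simp only [norm_mul, Complex.norm_I, Complex.norm_real, Real.norm_eq_abs, Complex.norm_ofNat,
      mul_one, abs_div, abs_neg, abs_of_pos pi_pos, abs_of_pos two_pi_pos]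
    field_simp
  calc |x| ^ n * ‖∫ ρ : ℝ, exp (I * x * ρ) * g ρ‖
      = ‖(2 * (π : ℂ) * I * ((-x / (2 * π) : ℝ) : ℂ)) ^ n • 𝓕 g (-x / (2 * π))‖ := by
        rw [norm_smul, norm_pow, hnorm, integral_exp_I_mul_mul_eq_fourier]
    _ = ‖𝓕 (iteratedDeriv n g) (-x / (2 * π))‖ := by
        rw [Real.fourier_iteratedDeriv hg hint hn]
    _ ≤ ∫ ρ, ‖iteratedDeriv n g ρ‖ := VectorFourier.norm_fourierIntegral_le_integral_norm _ _ _ _ _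

theorem abs_div_sqrt_one_add_sq_le_one (ρ : ℝ) : |ρ| / √(1 + ρ ^ 2) ≤ 1 := by
  rw [div_le_one (by positivity), ← sqrt_sq_eq_abs]
  exact sqrt_le_sqrt (by linarith)

theorem abs_div_sqrt_one_add_sq_zpow_neg_two (ρ : ℝ) :
    (|ρ| / √(1 + ρ ^ 2)) ^ (-2 : ℤ) = (1 + ρ ^ 2) / ρ ^ 2 := by
  rw [zpow_neg, zpow_two, ← sq, div_pow, sq_sqrt (by positivity), sq_abs, inv_div]

theorem one_add_abs_div_sqrt_zpow_one_sub_le_two (ρ : ℝ) {β : ℕ} (hβ : β ≤ 1) :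
    1 + (|ρ| / √(1 + ρ ^ 2)) ^ (1 - (β : ℤ)) ≤ 2 := by
  interval_cases β
  · norm_num
    linarith [abs_div_sqrt_one_add_sq_le_one ρ]
  · norm_num

theorem one_add_abs_div_sqrt_zpow_neg_two_le {q ρ : ℝ} (hq : 0 < q) (hρ : q / 2 ≤ |ρ|) :
    1 + (|ρ| / √(1 + ρ ^ 2)) ^ (-2 : ℤ) ≤ 4 * (1 + q ^ 2) / q ^ 2 := by
  have hρ2 : q ^ 2 / 4 ≤ ρ ^ 2 := by
    have := pow_le_pow_left₀ (by positivity) hρ 2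
    rw [sq_abs] at this
    linarith
  have hρ0 : 0 < ρ ^ 2 := by nlinarith
  rw [abs_div_sqrt_one_add_sq_zpow_neg_two, one_add_div hρ0.ne',
    div_le_div_iff₀ hρ0 (by positivity)]
  nlinarith [mul_le_mul_of_nonneg_left hρ2 (sq_nonneg q)]

theorem mul_one_add_mul_one_add_mul_sq_le {F t l A : ℝ} (hF : 0 ≤ F) (ht : 0 ≤ t) (hl₀ : 0 ≤ l)
    (hl₁ : l ≤ 1) (h₀ : F ≤ A) (h₁ : t * F ≤ A) (h₃ : l ^ 2 * (t ^ 3 * F) ≤ A) :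
    F * ((1 + t) * (1 + l * t) ^ 2) ≤ 9 * A := by
  have hpoly : (1 + t) * (1 + l * t) ^ 2 ≤ 1 + 5 * t + 3 * l ^ 2 * t ^ 3 := by
    -- `t (lt - 1)² ≥ 0` is AM–GM in the form `2lt² ≤ t + l²t³`
    nlinarith [mul_nonneg ht (sq_nonneg (l * t - 1)), mul_nonneg hl₀ ht,
      mul_nonneg (sub_nonneg.2 hl₁) ht]
  nlinarith [mul_le_mul_of_nonneg_left hpoly hF]

theorem one_add_mul_sq_le_one_add_abs_mul_one_add_mul_abs_sq {l : ℝ} (hl : 0 ≤ l) (x : ℝ) :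
    1 + (l * x) ^ 2 ≤ (1 + |x|) * (1 + l * |x|) ^ 2 := by
  rw [mul_pow, ← sq_abs x, ← mul_pow]
  nlinarith [mul_nonneg hl (abs_nonneg x), mul_nonneg (abs_nonneg x) (sq_nonneg (1 + l * |x|))]

theorem integral_inv_one_add_mul_sq {l : ℝ} (hl : 0 < l) :
    ∫ x : ℝ, (1 + (l * x) ^ 2)⁻¹ = π / l := by
  rw [Measure.integral_comp_mul_left (fun y : ℝ => (1 + y ^ 2)⁻¹), integral_univ_inv_one_add_sq,
    smul_eq_mul, abs_of_pos (inv_pos.2 hl)]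
  ring

theorem integral_le_of_le_mul_inv_one_add_mul_sq {f : ℝ → ℝ} {A l : ℝ} (hl : 0 < l)
    (hf₀ : ∀ x, 0 ≤ f x) (hf : ∀ x, f x ≤ A * (1 + (l * x) ^ 2)⁻¹) :
    ∫ x, f x ≤ π * A / l := by
  calc ∫ x, f x ≤ ∫ x, A * (1 + (l * x) ^ 2)⁻¹ :=
        integral_mono_of_nonneg (.of_forall hf₀)
          ((integrable_inv_one_add_sq.comp_mul_left' hl.ne').const_mul A) (.of_forall hf)
    _ = π * A / l := by rw [integral_const_mul, integral_inv_one_add_mul_sq hl]; ring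

theorem norm_integral_exp_I_mul_mul_le {q : ℝ} (hq : 0 < q) {g : ℝ → ℂ} (hg : ContDiff ℝ 3 g)
    (hsupp : support g ⊆ abs ⁻¹' Icc (q / 2) (2 * q))
    (hder : ∀ β : ℕ, β ≤ 3 → ∀ ρ : ℝ,
      ‖iteratedDeriv β g ρ‖ ≤ 1 + (|ρ| / √(1 + ρ ^ 2)) ^ (1 - (β : ℤ))) (x : ℝ) :
    ‖∫ ρ : ℝ, exp (I * x * ρ) * g ρ‖
      ≤ 144 * q / ((1 + |x|) * (1 + q / √(1 + q ^ 2) * |x|) ^ 2) := by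
  have hsuppn (n : ℕ) : support (iteratedDeriv n g) ⊆ abs ⁻¹' Icc (q / 2) (2 * q) :=
    support_iteratedDeriv_subset_of_isClosed (isClosed_Icc.preimage continuous_abs) hsupp n
  have hsuppIcc (n : ℕ) : support (iteratedDeriv n g) ⊆ Icc (-(2 * q)) (2 * q) :=
    fun ρ hρ => abs_le.1 (hsuppn n hρ).2
  have hint (n : ℕ) (hn : n ≤ (3 : ℕ∞)) : Integrable (iteratedDeriv n g) :=
    (hg.continuous_iteratedDeriv n (by exact_mod_cast hn)).integrable_of_hasCompactSupport
      (HasCompactSupport.intro isCompact_Icc fun ρ hρ =>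
        notMem_support.1 fun h => hρ (hsuppIcc n h))
  have hdecay {n : ℕ} (hn : n ≤ 3) {M : ℝ} (hM : ∀ ρ, ‖iteratedDeriv n g ρ‖ ≤ M) :
      |x| ^ n * ‖∫ ρ : ℝ, exp (I * x * ρ) * g ρ‖ ≤ M * (4 * q) := by
    refine (pow_abs_mul_norm_integral_exp_I_mul_mul_le hg hint (by exact_mod_cast hn) x).trans ?_
    have := integral_norm_le_of_support_subset (μ := volume) measure_Icc_lt_top (hsuppIcc n) hM
    rw [volume_real_Icc_of_le (by linarith)] at this
    linarith
  have h₀ := hdecay (n := 0) (by norm_num) fun ρ =>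
    (hder 0 (by norm_num) ρ).trans (one_add_abs_div_sqrt_zpow_one_sub_le_two ρ (by norm_num))
  have h₁ := hdecay (n := 1) (by norm_num) fun ρ =>
    (hder 1 (by norm_num) ρ).trans (one_add_abs_div_sqrt_zpow_one_sub_le_two ρ le_rfl)
  have h₃ := hdecay (n := 3) le_rfl (M := 4 * (1 + q ^ 2) / q ^ 2) fun ρ => by
    by_cases hρ : iteratedDeriv 3 g ρ = 0
    · rw [hρ, norm_zero]; positivity
    · refine (hder 3 le_rfl ρ).trans ?_
      exact one_add_abs_div_sqrt_zpow_neg_two_le hq (hsuppn 3 hρ).1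
  have hs : q ≤ √(1 + q ^ 2) := (le_sqrt hq.le (by positivity)).2 (by linarith)
  have hl₁ : q / √(1 + q ^ 2) ≤ 1 := (div_le_one (by positivity)).2 hs
  have hl₃ : (q / √(1 + q ^ 2)) ^ 2 * (4 * (1 + q ^ 2) / q ^ 2 * (4 * q)) = 16 * q := by
    rw [div_pow, sq_sqrt (by positivity)]
    field_simp
    ring
  rw [le_div_iff₀ (by positivity)]
  refine (mul_one_add_mul_one_add_mul_sq_le (A := 16 * q) (norm_nonneg _) (abs_nonneg x)
    (by positivity) hl₁ ?_ ?_ ?_).trans_eq (by ring)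
  · simp only [pow_zero, one_mul] at h₀; linarith
  · simp only [pow_one] at h₁; linarith
  · rw [← hl₃]; gcongr

/-- One-dimensional oscillatory integral estimate: if `g` is `C³`,
supported in `{2^{k−1} ≤ |ρ| ≤ 2^{k+1}}`, with `|g^{(β)}(ρ)| ≤ 1 + (|ρ|/⟨ρ⟩)^{1−β}`
for `β ≤ 3`, then `|∫ e^{ixρ} g(ρ) dρ| ≤ C·2^k(1+|x|)^{−1}(1+(2^k/⟨2^k⟩)|x|)^{−2}`
and consequently the `L¹_x` norm of this Fourier transform is at most `C·⟨2^k⟩`,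
with `C` absolute. -/
theorem stmt_5 :
    ∃ C : ℝ, 0 < C ∧
      ∀ (k : ℤ) (g : ℝ → ℂ),
        ContDiff ℝ 3 g →
        (∀ ρ : ℝ, g ρ ≠ 0 → (2:ℝ) ^ (k - 1) ≤ |ρ| ∧ |ρ| ≤ (2:ℝ) ^ (k + 1)) →
        (∀ β : ℕ, β ≤ 3 → ∀ ρ : ℝ,
          ‖iteratedDeriv β g ρ‖ ≤ 1 + (|ρ| / Real.sqrt (1 + ρ ^ 2)) ^ (1 - (β:ℤ))) →
        (∀ x : ℝ,
          ‖∫ ρ : ℝ, Complex.exp (Complex.I * x * ρ) * g ρ‖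
            ≤ C * (2:ℝ) ^ k * (1 + |x|)⁻¹ *
                ((1 + ((2:ℝ) ^ k / Real.sqrt (1 + ((2:ℝ) ^ k) ^ 2)) * |x|) ^ 2)⁻¹)
        ∧ (∫ x : ℝ, ‖∫ ρ : ℝ, Complex.exp (Complex.I * x * ρ) * g ρ‖)
            ≤ C * Real.sqrt (1 + ((2:ℝ) ^ k) ^ 2) := by
  refine ⟨1000, by norm_num, fun k g hg hsupp hder => ?_⟩
  set q : ℝ := 2 ^ k
  have hq : 0 < q := by positivity
  have hl : 0 < q / √(1 + q ^ 2) := by positivity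
  have hsupp' : support g ⊆ abs ⁻¹' Icc (q / 2) (2 * q) := fun ρ hρ => by
    have h := hsupp ρ hρ
    rwa [zpow_sub_one₀ two_ne_zero, zpow_add_one₀ two_ne_zero, ← div_eq_mul_inv,
      mul_comm] at h
  have hF := norm_integral_exp_I_mul_mul_le hq hg hsupp' hder
  refine ⟨fun x => (hF x).trans ?_, ?_⟩
  · rw [mul_assoc, mul_assoc, ← mul_inv, ← div_eq_mul_inv, ← mul_div_assoc]
    gcongr
    norm_num
  · have hF' (x : ℝ) : ‖∫ ρ : ℝ, exp (I * x * ρ) * g ρ‖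
        ≤ 144 * q * (1 + (q / √(1 + q ^ 2) * x) ^ 2)⁻¹ :=
      (hF x).trans (div_le_div_of_nonneg_left (by positivity) (by positivity)
        (one_add_mul_sq_le_one_add_abs_mul_one_add_mul_abs_sq hl.le x))
    refine (integral_le_of_le_mul_inv_one_add_mul_sq hl (fun _ => norm_nonneg _) hF').trans ?_
    calc π * (144 * q) / (q / √(1 + q ^ 2)) = 144 * π * √(1 + q ^ 2) := by field_simp
      _ ≤ 1000 * √(1 + q ^ 2) := by gcongr; linarith [pi_le_four]
end

section
/- There exists a constant c > 0 such that for all ξ, η ∈ ℝ³ and all choices of signs ε₁, ε₂ ∈ {+1, −1}: |⟨ξ⟩ − ε₁⟨ξ−η⟩ − ε₂⟨η⟩| ≥ c · (⟨ξ⟩ + ⟨η⟩)^{−1}. (One may take c = 1/8.) -/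
/-!
Write `⟨x⟩ = √(1 + ‖x‖²)`. The triangle inequality sharpens to
`⟨u + v⟩ + ⟨u + v⟩⁻¹ ≤ ⟨u⟩ + ⟨v⟩`, because `⟨u⟩ + ⟨v⟩ ≥ √(4 + ‖u + v‖²)` (the masses add up)
and `√(4 + t) - √(1 + t) ≥ (√(1 + t))⁻¹`. Applied to the three sides of the triangle
`ξ = (ξ - η) + η`, this bounds each of the phases with one or two minus signs from below by
the inverse of one of `⟨ξ⟩, ⟨ξ - η⟩, ⟨η⟩`, each of which is at most `⟨ξ⟩ + ⟨η⟩`; the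
remaining phase `⟨ξ⟩ + ⟨ξ - η⟩ + ⟨η⟩` is at least `3`. So `c = 1` works.
-/

open Real

noncomputable def japaneseBracket {E : Type*} [SeminormedAddCommGroup E] (x : E) : ℝ :=
  √(1 + ‖x‖ ^ 2)

section JapaneseBracket

variable {E : Type*} [SeminormedAddCommGroup E]

lemma sq_japaneseBracket (x : E) : japaneseBracket x ^ 2 = 1 + ‖x‖ ^ 2 :=
  sq_sqrt (by positivity)

lemma one_le_japaneseBracket (x : E) : 1 ≤ japaneseBracket x :=
  one_le_sqrt.mpr (by simp)

lemma japaneseBracket_pos (x : E) : 0 < japaneseBracket x :=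
  one_pos.trans_le (one_le_japaneseBracket x)

lemma japaneseBracket_neg (x : E) : japaneseBracket (-x) = japaneseBracket x := by
  rw [japaneseBracket, japaneseBracket, norm_neg]

lemma one_add_norm_mul_norm_le_japaneseBracket_mul (u v : E) :
    1 + ‖u‖ * ‖v‖ ≤ japaneseBracket u * japaneseBracket v := by
  rw [japaneseBracket, japaneseBracket, ← sqrt_mul (by positivity)]
  -- `(1 + a²)(1 + b²) = (1 + ab)² + (a - b)²`
  exact le_sqrt_of_sq_le (by nlinarith [sq_nonneg (‖u‖ - ‖v‖)])

lemma sqrt_four_add_norm_add_sq_le (u v : E) :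
    √(4 + ‖u + v‖ ^ 2) ≤ japaneseBracket u + japaneseBracket v := by
  have hmul := one_add_norm_mul_norm_le_japaneseBracket_mul u v
  have htri : ‖u + v‖ ^ 2 ≤ (‖u‖ + ‖v‖) ^ 2 := by gcongr; exact norm_add_le u v
  refine sqrt_le_iff.mpr ⟨(add_pos (japaneseBracket_pos u) (japaneseBracket_pos v)).le, ?_⟩
  nlinarith [sq_japaneseBracket u, sq_japaneseBracket v]

lemma sqrt_one_add_add_inv_le_sqrt_four_add {t : ℝ} (ht : 0 ≤ t) :
    √(1 + t) + (√(1 + t))⁻¹ ≤ √(4 + t) := by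
  have hP : 0 < √(1 + t) := sqrt_pos.mpr (by linarith)
  have hprod : 2 + t ≤ √(4 + t) * √(1 + t) := by
    rw [← sqrt_mul (by linarith)]
    exact le_sqrt_of_sq_le (by nlinarith)
  calc √(1 + t) + (√(1 + t))⁻¹ = (2 + t) / √(1 + t) := by
        field_simp
        rw [sq_sqrt (by linarith)]
        ring
    _ ≤ √(4 + t) := (div_le_iff₀ hP).mpr hprod

lemma japaneseBracket_add_inv_le (u v : E) :
    japaneseBracket (u + v) + (japaneseBracket (u + v))⁻¹ ≤
      japaneseBracket u + japaneseBracket v :=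
  (sqrt_one_add_add_inv_le_sqrt_four_add (sq_nonneg ‖u + v‖)).trans
    (sqrt_four_add_norm_add_sq_le u v)

end JapaneseBracket

lemma inv_add_le_abs_sub_sub {A B C ε₁ ε₂ : ℝ} (hA : 1 ≤ A) (hB : 0 < B) (hC : 1 ≤ C)
    (hABC : A + A⁻¹ ≤ B + C) (hBAC : B + B⁻¹ ≤ A + C) (hCAB : C + C⁻¹ ≤ A + B)
    (h₁ : ε₁ = 1 ∨ ε₁ = -1) (h₂ : ε₂ = 1 ∨ ε₂ = -1) :
    (A + C)⁻¹ ≤ |A - ε₁ * B - ε₂ * C| := by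
  have hA₀ : 0 < A := one_pos.trans_le hA
  have hC₀ : 0 < C := one_pos.trans_le hC
  have hB_le : B ≤ A + C := by linarith [inv_pos.mpr hB]
  have hAC_inv_le_A : (A + C)⁻¹ ≤ A⁻¹ := inv_anti₀ hA₀ (by linarith)
  have hAC_inv_le_B : (A + C)⁻¹ ≤ B⁻¹ := inv_anti₀ hB hB_le
  have hAC_inv_le_C : (A + C)⁻¹ ≤ C⁻¹ := inv_anti₀ hC₀ (by linarith)
  have hAC_inv_le_one : (A + C)⁻¹ ≤ 1 := inv_le_one_of_one_le₀ (by linarith)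
  rcases h₁ with rfl | rfl <;> rcases h₂ with rfl | rfl
  · exact le_abs.mpr (Or.inr (by linarith))
  all_goals exact le_abs.mpr (Or.inl (by linarith))

/-- No time resonances for the quadratic Klein–Gordon phase:
there is `c > 0` (e.g. `c = 1/8`) so that for all `ξ, η ∈ ℝ³` and signs
`ε₁, ε₂ ∈ {±1}`, `|⟨ξ⟩ − ε₁⟨ξ−η⟩ − ε₂⟨η⟩| ≥ c(⟨ξ⟩+⟨η⟩)⁻¹`,
where `⟨x⟩ = √(1+|x|²)`. -/
theorem stmt_6 :
    ∃ c : ℝ, 0 < c ∧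
      ∀ (ξ η : EuclideanSpace ℝ (Fin 3)) (ε₁ ε₂ : ℝ),
        (ε₁ = 1 ∨ ε₁ = -1) → (ε₂ = 1 ∨ ε₂ = -1) →
        c * (Real.sqrt (1 + ‖ξ‖ ^ 2) + Real.sqrt (1 + ‖η‖ ^ 2))⁻¹ ≤
          |Real.sqrt (1 + ‖ξ‖ ^ 2) - ε₁ * Real.sqrt (1 + ‖ξ - η‖ ^ 2)
            - ε₂ * Real.sqrt (1 + ‖η‖ ^ 2)| := by
  refine ⟨1, one_pos, fun ξ η ε₁ ε₂ h₁ h₂ => ?_⟩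
  rw [one_mul]
  have hξ := japaneseBracket_add_inv_le (ξ - η) η
  have hξη := japaneseBracket_add_inv_le ξ (-η)
  have hη := japaneseBracket_add_inv_le ξ (η - ξ)
  rw [sub_add_cancel] at hξ
  rw [← sub_eq_add_neg, japaneseBracket_neg] at hξη
  rw [add_sub_cancel, ← neg_sub ξ η, japaneseBracket_neg] at hη
  exact inv_add_le_abs_sub_sub (one_le_japaneseBracket ξ) (japaneseBracket_pos _)
    (one_le_japaneseBracket η) hξ hξη hη h₁ h₂
end
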